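/- If G is an r-graph and S is a barrier of size greater than 1 such that every component of G−S is a single vertex, then G is bipartite. -/

import Mathlib

/-- A multigraph on vertex type `V` with edge type `E`: each edge has a pair of endpoints. -/
structure Multigraph (V E : Type) where
  ends : E → Sym2 V

namespace Multigraph

variable {V E : Type}

/-- No loops: no edge has equal endpoints. -/
def Loopless (G : Multigraph V E) : Prop := ∀ e, ¬ (G.ends e).IsDiag

/-- The degree of a vertex: the number of edges incident with it. -/
noncomputable def degree (G : Multigraph V E) (v : V) : ℕ := Nat.card {e | v ∈ G.ends e}

/-- The edge cut `∂(X)`: edges with exactly one end in `X`. -/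
def cut (G : Multigraph V E) (X : Set V) : Set E :=
  {e | ∃ u ∈ X, ∃ w ∉ X, G.ends e = s(u, w)}

/-- The underlying simple graph. -/
def toSimple (G : Multigraph V E) : SimpleGraph V where
  Adj u w := u ≠ w ∧ ∃ e, G.ends e = s(u, w)
  symm := by
    constructor
    rintro u w ⟨h, e, he⟩
    exact ⟨h.symm, e, by rw [he, Sym2.eq_swap]⟩
  loopless := by constructor; rintro u ⟨h, _⟩; exact h rfl

/-- Connectivity of a multigraph. -/
def Connected (G : Multigraph V E) : Prop := G.toSimple.Connected

/-- `M` is a perfect matching on the vertex set `A`: every edge of `M` has both ends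
in `A` and every vertex of `A` is covered by exactly one edge of `M`. -/
def IsPerfectMatchingOn (G : Multigraph V E) (A : Set V) (M : Set E) : Prop :=
  (∀ e ∈ M, ∀ v ∈ G.ends e, v ∈ A) ∧ ∀ v ∈ A, ∃! e, e ∈ M ∧ v ∈ G.ends e

/-- A perfect matching of `G`. -/
def IsPerfectMatching (G : Multigraph V E) (M : Set E) : Prop :=
  G.IsPerfectMatchingOn Set.univ M

/-- `θ(G−S)`: the number of odd components of `G − S`. -/
noncomputable def theta (G : Multigraph V E) (S : Set V) : ℕ :=
  Nat.card {c : (G.toSimple.induce Sᶜ).ConnectedComponent // Odd (Nat.card c.supp)}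

/-- A barrier: a vertex set `S` with `θ(G−S) = |S|`. -/
def IsBarrier (G : Multigraph V E) (S : Set V) : Prop := G.theta S = Nat.card S

/-- Bi-critical: deleting any two distinct vertices leaves a graph with a perfect matching. -/
def Bicritical (G : Multigraph V E) : Prop :=
  ∀ u v : V, u ≠ v → ∃ M, G.IsPerfectMatchingOn {u, v}ᶜ M

/-- Bipartite multigraph. -/
def Bipartite (G : Multigraph V E) : Prop := G.toSimple.Colorable 2

/-- `k`-vertex-connected: deleting fewer than `k` vertices leaves a connected graph. -/
def VertexConnected (G : Multigraph V E) (k : ℕ) : Prop :=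
  ∀ S : Set V, Nat.card S < k → (G.toSimple.induce Sᶜ).Connected

/-- A brick: non-bipartite, bi-critical and 3-vertex-connected. -/
def IsBrick (G : Multigraph V E) : Prop :=
  ¬ G.Bipartite ∧ G.Bicritical ∧ G.VertexConnected 3

/-- A proper edge coloring with `k` colors exists. -/
def EdgeColorable (G : Multigraph V E) (k : ℕ) : Prop :=
  ∃ c : E → Fin k, ∀ e f, e ≠ f → (∃ v, v ∈ G.ends e ∧ v ∈ G.ends f) → c e ≠ c f

/-- A non-trivial odd vertex set: odd cardinality, different from `1` and `|V|−1`. -/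
def NontrivialOdd (_G : Multigraph V E) (X : Set V) : Prop :=
  Odd (Nat.card X) ∧ Nat.card X ≠ 1 ∧ Nat.card X ≠ Nat.card V - 1

/-- An `r`-graph: a loopless `r`-regular multigraph in which every odd vertex set
has at least `r` edges leaving it. -/
def IsRGraph (G : Multigraph V E) (r : ℕ) : Prop :=
  G.Loopless ∧ (∀ v, G.degree v = r) ∧
    ∀ X : Set V, Odd (Nat.card X) → r ≤ Nat.card (G.cut X)

end Multigraph

/-! Since the components of `G − S` are single vertices, every edge of `G` has an end in `S`,
and `|V ∖ S| = θ(G − S) = |S|`. Counting vertex–edge incidences in the `r`-regular graph gives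
`r|S|` on each side of the cut; as every edge has one or two ends in `S`, equality forces
exactly one, so `(S, V ∖ S)` is a bipartition. -/

open Finset

namespace SimpleGraph

variable {V : Type} {H : SimpleGraph V}

theorem connectedComponentMk_injective_of_card_supp_eq_one
    (h : ∀ c : H.ConnectedComponent, Nat.card c.supp = 1) :
    Function.Injective H.connectedComponentMk := by
  intro x y hxy
  have : Subsingleton (H.connectedComponentMk x).supp :=
    (Nat.card_eq_one_iff_unique.mp (h _)).1
  have hy : y ∈ (H.connectedComponentMk x).supp := hxy.symm
  exact congrArg Subtype.val
    (Subsingleton.elim (⟨x, rfl⟩ : (H.connectedComponentMk x).supp) ⟨y, hy⟩)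

theorem card_connectedComponent_eq_card_of_card_supp_eq_one
    (h : ∀ c : H.ConnectedComponent, Nat.card c.supp = 1) :
    Nat.card H.ConnectedComponent = Nat.card V :=
  (Nat.card_eq_of_bijective _
    ⟨connectedComponentMk_injective_of_card_supp_eq_one h, fun c => c.exists_rep⟩).symm

theorem not_adj_of_card_supp_eq_one
    (h : ∀ c : H.ConnectedComponent, Nat.card c.supp = 1) (u w : V) : ¬ H.Adj u w := fun hadj =>
  hadj.ne <| connectedComponentMk_injective_of_card_supp_eq_one h <|
    ConnectedComponent.sound hadj.reachable

end SimpleGraph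

namespace Multigraph

variable {V E : Type} (G : Multigraph V E)

theorem toSimple_adj_of_ends_eq (hG : G.Loopless) {e : E} {u w : V} (he : G.ends e = s(u, w)) :
    G.toSimple.Adj u w :=
  ⟨fun huw => hG e (by rw [he, huw]; exact Sym2.mk_isDiag_iff.mpr rfl), e, he⟩

theorem theta_eq_card_compl_of_card_supp_eq_one {S : Set V}
    (h : ∀ c : (G.toSimple.induce Sᶜ).ConnectedComponent, Nat.card c.supp = 1) :
    G.theta S = Nat.card ↥Sᶜ := by
  rw [theta, Nat.card_congr (Equiv.subtypeUnivEquiv fun c => by rw [h c]; exact odd_one),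
    SimpleGraph.card_connectedComponent_eq_card_of_card_supp_eq_one h]

theorem exists_mem_ends_mem_of_card_supp_eq_one (hG : G.Loopless) {S : Set V}
    (h : ∀ c : (G.toSimple.induce Sᶜ).ConnectedComponent, Nat.card c.supp = 1) (e : E) :
    ∃ v ∈ G.ends e, v ∈ S := by
  induction he : G.ends e using Sym2.ind with | _ u w => ?_
  by_contra! hout
  exact SimpleGraph.not_adj_of_card_supp_eq_one h ⟨u, hout u (Sym2.mem_mk_left u w)⟩
    ⟨w, hout w (Sym2.mem_mk_right u w)⟩ (G.toSimple_adj_of_ends_eq hG he)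

theorem sum_degree_eq_sum_card_filter_mem_ends [Fintype E] [DecidableEq V] (s : Finset V) :
    ∑ v ∈ s, G.degree v = ∑ e, #{v ∈ s | v ∈ G.ends e} := by
  calc ∑ v ∈ s, G.degree v
        = ∑ v ∈ s, #(univ.bipartiteAbove (fun v e => v ∈ G.ends e) v) :=
        sum_congr rfl fun v _ => by rw [degree, Nat.card_eq_fintype_card, Fintype.card_subtype]; rfl
    _ = _ := sum_card_bipartiteAbove_eq_sum_card_bipartiteBelow _

theorem card_filter_mem_ends_add_card_compl [Fintype V] [DecidableEq V] (hG : G.Loopless)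
    (s : Finset V) (e : E) : #{v ∈ s | v ∈ G.ends e} + #{v ∈ sᶜ | v ∈ G.ends e} = 2 := by
  rw [← card_union_of_disjoint (disjoint_filter_filter disjoint_compl_right), ← filter_union,
    union_compl, show ({v | v ∈ G.ends e} : Finset V) = (G.ends e).toFinset by ext; simp]
  exact Sym2.card_toFinset_of_not_isDiag _ (hG e)

theorem exists_mem_ends_not_mem_of_card_eq [Fintype V] [Fintype E] [DecidableEq V] {r : ℕ}
    (hloop : G.Loopless) (hreg : ∀ v, G.degree v = r) (s : Finset V) (hs : #s = #sᶜ)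
    (hmeet : ∀ e, ∃ v ∈ G.ends e, v ∈ s) (e : E) : ∃ v ∈ G.ends e, v ∉ s := by
  set a : E → ℕ := fun e => #{v ∈ s | v ∈ G.ends e}
  set b : E → ℕ := fun e => #{v ∈ sᶜ | v ∈ G.ends e}
  have hab : ∀ e, a e + b e = 2 := G.card_filter_mem_ends_add_card_compl hloop s
  have hsum : ∑ e, b e = ∑ e, a e := by
    simp only [a, b, ← sum_degree_eq_sum_card_filter_mem_ends, hreg, sum_const, hs]
  -- Since `a ≥ 1` and `a + b = 2`, we get `b ≤ a`; equal sums then force `b = a = 1`.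
  have hle : ∀ e ∈ univ, b e ≤ a e := fun e _ => by
    obtain ⟨v, hv, hvs⟩ := hmeet e
    have : 0 < a e := card_pos.mpr ⟨v, mem_filter.mpr ⟨hvs, hv⟩⟩
    have := hab e
    omega
  have hba := (sum_eq_sum_iff_of_le hle).mp hsum e (mem_univ e)
  obtain ⟨v, hv⟩ : {v ∈ sᶜ | v ∈ G.ends e}.Nonempty :=
    card_pos.mp (show 0 < b e by have := hab e; omega)
  rw [mem_filter, mem_compl] at hv
  exact ⟨v, hv.2, hv.1⟩

theorem bipartite_of_forall_exists_mem_ends (S : Set V) (hin : ∀ e, ∃ v ∈ G.ends e, v ∈ S)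
    (hout : ∀ e, ∃ v ∈ G.ends e, v ∉ S) : G.Bipartite := by
  classical
  refine ⟨SimpleGraph.Coloring.mk (fun v => if v ∈ S then (0 : Fin 2) else 1) ?_⟩
  rintro u w ⟨-, e, he⟩
  obtain ⟨a, ha, haS⟩ := hin e
  obtain ⟨b, hb, hbS⟩ := hout e
  rw [he, Sym2.mem_iff] at ha hb
  rcases ha with rfl | rfl <;> rcases hb with rfl | rfl <;> simp_all

end Multigraph

theorem barrier_singletons_bipartite_general {V E : Type} [Fintype V] [Fintype E]
    (G : Multigraph V E) (r : ℕ) (hG : G.IsRGraph r)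
    (S : Set V) (hS : G.IsBarrier S)
    (hsingle : ∀ c : (G.toSimple.induce Sᶜ).ConnectedComponent, Nat.card c.supp = 1) :
    G.Bipartite := by
  classical
  obtain ⟨hloop, hreg, -⟩ := hG
  have hin := G.exists_mem_ends_mem_of_card_supp_eq_one hloop hsingle
  have hcompl : Nat.card ↥Sᶜ = Nat.card S :=
    (G.theta_eq_card_compl_of_card_supp_eq_one hsingle).symm.trans hS
  refine G.bipartite_of_forall_exists_mem_ends S hin fun e => ?_
  have hcard : #S.toFinset = #S.toFinsetᶜ := by
    rw [← Set.toFinset_compl, ← Nat.card_eq_card_toFinset, ← Nat.card_eq_card_toFinset, hcompl]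
  simpa using G.exists_mem_ends_not_mem_of_card_eq hloop hreg S.toFinset hcard
    (by simpa using hin) e

/-- If G is an r-graph and S is a barrier of size greater than 1 such that
every component of G − S is a single vertex, then G is bipartite. -/
theorem barrier_singletons_bipartite {V E : Type} [Fintype V] [Fintype E]
    (G : Multigraph V E) (r : ℕ) (hG : G.IsRGraph r)
    (S : Set V) (hS : G.IsBarrier S) (hcard : 1 < Nat.card S)
    (hsingle : ∀ c : (G.toSimple.induce Sᶜ).ConnectedComponent, Nat.card c.supp = 1) :
    G.Bipartite :=
  barrier_singletons_bipartite_general G r hG S hS hsingle
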